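/- arXiv:1012.5505 — 9 statements merged into one kernel-verified Lean document; each statement's English description precedes it below -/
import Mathlib

section
/- Let S be a semiring and n ≥ 2. A matrix A ∈ M_n(S) commutes with the shift matrix J_n if and only if A is a polynomial in J_n with coefficients in S; that is, the centralizer of J_n in M_n(S) equals {a_0·I_n + a_1·J_n + a_2·J_n² + ... + a_{n-1}·J_n^{n-1} : a_0, ..., a_{n-1} ∈ S}. -/
/-- The nilpotent shift matrix `J_n = E_{1,2} + E_{2,3} + ... + E_{n-1,n}`. -/
def shiftJ (S : Type*) [Semiring S] (n : ℕ) : Matrix (Fin n) (Fin n) S :=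
  Matrix.of fun i j => if (i : ℕ) + 1 = (j : ℕ) then 1 else 0

section aux

variable {S : Type*} [Semiring S] {n : ℕ}

lemma shiftJ_apply (i j : Fin n) :
    shiftJ S n i j = if (i : ℕ) + 1 = (j : ℕ) then 1 else 0 := rfl

lemma shiftJ_pow_apply (m : ℕ) (i j : Fin n) :
    (shiftJ S n ^ m) i j = if (i : ℕ) + m = (j : ℕ) then 1 else 0 := by
  induction m generalizing i j with
  | zero => simp [Matrix.one_apply, Fin.ext_iff]
  | succ m ih =>
    rw [pow_succ, Matrix.mul_apply]
    by_cases h : (i : ℕ) + m < n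
    · rw [Finset.sum_eq_single (⟨(i : ℕ) + m, h⟩ : Fin n)]
      · rw [ih, shiftJ_apply, if_pos rfl, one_mul]
        simp [← add_assoc]
      · intro k _ hk
        have hne : (i : ℕ) + m ≠ (k : ℕ) := fun hc => hk (Fin.ext hc.symm)
        rw [ih, if_neg hne, zero_mul]
      · intro hk; exact absurd (Finset.mem_univ _) hk
    · rw [if_neg (by omega)]
      apply Finset.sum_eq_zero
      intro k _
      rw [ih, if_neg (by omega), zero_mul]

lemma mul_shiftJ_apply (A : Matrix (Fin n) (Fin n) S) (i j : Fin n) :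
    (A * shiftJ S n) i j =
      if h : 1 ≤ (j : ℕ) then A i ⟨(j : ℕ) - 1, by omega⟩ else 0 := by
  rw [Matrix.mul_apply]
  split_ifs with h
  · rw [Finset.sum_eq_single (⟨(j : ℕ) - 1, by omega⟩ : Fin n)]
    · rw [shiftJ_apply, if_pos (by simp; omega), mul_one]
    · intro k _ hk
      have hne : (k : ℕ) ≠ (j : ℕ) - 1 := fun hc => hk (Fin.ext hc)
      rw [shiftJ_apply, if_neg (by omega), mul_zero]
    · intro hk; exact absurd (Finset.mem_univ _) hk
  · apply Finset.sum_eq_zero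
    intro k _
    rw [shiftJ_apply, if_neg (by omega), mul_zero]

lemma shiftJ_mul_apply (A : Matrix (Fin n) (Fin n) S) (i j : Fin n) :
    (shiftJ S n * A) i j =
      if h : (i : ℕ) + 1 < n then A ⟨(i : ℕ) + 1, h⟩ j else 0 := by
  rw [Matrix.mul_apply]
  split_ifs with h
  · rw [Finset.sum_eq_single (⟨(i : ℕ) + 1, h⟩ : Fin n)]
    · rw [shiftJ_apply, if_pos rfl, one_mul]
    · intro k _ hk
      have hne : (i : ℕ) + 1 ≠ (k : ℕ) := fun hc => hk (Fin.ext hc.symm)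
      rw [shiftJ_apply, if_neg hne, zero_mul]
    · intro hk; exact absurd (Finset.mem_univ _) hk
  · apply Finset.sum_eq_zero
    intro k _
    rw [shiftJ_apply, if_neg (by omega), zero_mul]

lemma sum_smul_shiftJ_pow_apply (a : Fin n → S) (i j : Fin n) :
    (∑ k : Fin n, a k • shiftJ S n ^ (k : ℕ)) i j =
      if h : (i : ℕ) ≤ (j : ℕ) then a ⟨(j : ℕ) - (i : ℕ), by omega⟩ else 0 := by
  rw [Matrix.sum_apply]
  simp only [Matrix.smul_apply, shiftJ_pow_apply, smul_eq_mul]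
  split_ifs with h
  · rw [Finset.sum_eq_single (⟨(j : ℕ) - (i : ℕ), by omega⟩ : Fin n)]
    · rw [if_pos (by simp; omega), mul_one]
    · intro k _ hk
      have hne : (k : ℕ) ≠ (j : ℕ) - (i : ℕ) := fun hc => hk (Fin.ext hc)
      rw [if_neg (by omega), mul_zero]
    · intro hk; exact absurd (Finset.mem_univ _) hk
  · apply Finset.sum_eq_zero
    intro k _
    rw [if_neg (by omega), mul_zero]

end aux

/-- The centralizer of the shift matrix `J_n` in `M_n(S)` consists exactly of the
polynomials `a₀ I + a₁ J + ... + a_{n-1} J^{n-1}` in `J_n`. -/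
theorem centralizer_shiftJ (S : Type*) [Semiring S] (n : ℕ) (hn : 2 ≤ n) :
    {A : Matrix (Fin n) (Fin n) S | A * shiftJ S n = shiftJ S n * A} =
      {A : Matrix (Fin n) (Fin n) S |
        ∃ a : Fin n → S, A = ∑ k : Fin n, a k • shiftJ S n ^ (k : ℕ)} := by
  haveI : NeZero n := ⟨by omega⟩
  ext A
  simp only [Set.mem_setOf_eq]
  constructor
  · intro hA
    have hA' : ∀ i j : Fin n, (A * shiftJ S n) i j = (shiftJ S n * A) i j := by
      intro i j; rw [hA]
    -- below-diagonal first-column vanishing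
    have hZ : ∀ (d : ℕ) (hd : d + 1 < n), A ⟨d + 1, hd⟩ ⟨0, by omega⟩ = 0 := by
      intro d hd
      have h := hA' ⟨d, by omega⟩ ⟨0, by omega⟩
      rw [mul_shiftJ_apply, shiftJ_mul_apply] at h
      rw [dif_neg (by simp)] at h
      rw [dif_pos (show (⟨d, by omega⟩ : Fin n).val + 1 < n from hd)] at h
      exact h.symm
    -- Toeplitz property
    have hT : ∀ (d e : ℕ) (hd : d + 1 < n) (he : e + 1 < n),
        A ⟨d + 1, hd⟩ ⟨e + 1, he⟩ = A ⟨d, by omega⟩ ⟨e, by omega⟩ := by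
      intro d e hd he
      have h := hA' ⟨d, by omega⟩ ⟨e + 1, he⟩
      rw [mul_shiftJ_apply, shiftJ_mul_apply] at h
      rw [dif_pos (show 1 ≤ (⟨e + 1, he⟩ : Fin n).val by simp)] at h
      rw [dif_pos (show (⟨d, by omega⟩ : Fin n).val + 1 < n from hd)] at h
      simp only [Fin.val_mk, Nat.add_sub_cancel] at h
      exact h.symm
    refine ⟨fun k => A 0 k, ?_⟩
    have key : ∀ (d : ℕ) (hd : d < n) (j : Fin n),
        A ⟨d, hd⟩ j = if h : d ≤ (j : ℕ) then A 0 ⟨(j : ℕ) - d, by omega⟩ else 0 := by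
      intro d
      induction d with
      | zero =>
        intro hd j
        rw [dif_pos (Nat.zero_le _)]
        congr 1 <;> exact Fin.ext (by simp)
      | succ d ih =>
        intro hd j
        obtain ⟨jv, hj⟩ := j
        match jv, hj with
        | 0, hj =>
          rw [dif_neg (by simp)]
          exact hZ d hd
        | e + 1, hj =>
          rw [hT d e hd hj, ih (by omega) ⟨e, by omega⟩]
          by_cases hc : d ≤ e
          · rw [dif_pos (by simpa using hc), dif_pos (by simp; omega)]
            congr 1
            exact Fin.ext (by simp)
          · rw [dif_neg (by simpa using hc), dif_neg (by simp; omega)]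
    ext i j
    rw [sum_smul_shiftJ_pow_apply]
    obtain ⟨iv, hi⟩ := i
    rw [key iv hi j]
  · rintro ⟨a, rfl⟩
    ext i j
    rw [mul_shiftJ_apply, shiftJ_mul_apply]
    by_cases h1 : 1 ≤ (j : ℕ)
    · rw [dif_pos h1, sum_smul_shiftJ_pow_apply]
      by_cases h2 : (i : ℕ) + 1 < n
      · rw [dif_pos h2, sum_smul_shiftJ_pow_apply]
        by_cases h3 : (i : ℕ) ≤ (j : ℕ) - 1
        · rw [dif_pos (by simpa using h3), dif_pos (by simp; omega)]
          congr 1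
          exact Fin.ext (by simp; omega)
        · rw [dif_neg (by simpa using h3), dif_neg (by simp; omega)]
      · rw [dif_neg h2, dif_neg (by simp; omega)]
    · rw [dif_neg h1]
      by_cases h2 : (i : ℕ) + 1 < n
      · rw [dif_pos h2, sum_smul_shiftJ_pow_apply, dif_neg (by simp; omega)]
      · rw [dif_neg h2]
end

section
/- Let S be a semiring and n ≥ 2. A matrix A ∈ M_n(S) commutes with the transposed shift matrix J_nᵀ if and only if A is a polynomial in J_nᵀ with coefficients in S; that is, the centralizer of J_nᵀ in M_n(S) equals {b_0·I_n + b_1·J_nᵀ + b_2·(J_nᵀ)² + ... + b_{n-1}·(J_nᵀ)^{n-1} : b_0, ..., b_{n-1} ∈ S}. -/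
open Matrix

lemma sum_boole_left {S : Type*} [Semiring S] {n : ℕ} (m : ℕ) (f : Fin n → S) :
    ∑ k : Fin n, (if m = (k:ℕ) then 1 else 0) * f k = if h : m < n then f ⟨m,h⟩ else 0 := by
  split_ifs with h
  · rw [Finset.sum_eq_single ⟨m, h⟩]
    · simp
    · intro k _ hk
      rw [if_neg, zero_mul]
      intro hmk; exact hk (by simp [Fin.ext_iff, hmk.symm])
    · simp
  · apply Finset.sum_eq_zero
    intro k _
    rw [if_neg, zero_mul]
    intro hmk; omega

lemma sum_boole_right {S : Type*} [Semiring S] {n : ℕ} (m : ℕ) (f : Fin n → S) :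
    ∑ k : Fin n, f k * (if m = (k:ℕ) then 1 else 0) = if h : m < n then f ⟨m,h⟩ else 0 := by
  split_ifs with h
  · rw [Finset.sum_eq_single ⟨m, h⟩]
    · simp
    · intro k _ hk
      rw [if_neg, mul_zero]
      intro hmk; exact hk (by simp [Fin.ext_iff, hmk.symm])
    · simp
  · apply Finset.sum_eq_zero
    intro k _
    rw [if_neg, mul_zero]
    intro hmk; omega

lemma shiftJ_pow (S : Type*) [Semiring S] (n k : ℕ) :
    (shiftJ S n) ^ k = Matrix.of (fun i j : Fin n => if (i:ℕ) + k = (j:ℕ) then (1:S) else 0) := by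
  induction k with
  | zero =>
    ext i j
    simp [Matrix.one_apply, Fin.ext_iff]
  | succ k ih =>
    ext i j
    rw [pow_succ, ih]
    simp only [Matrix.mul_apply, Matrix.of_apply, shiftJ]
    have : ∀ m : Fin n, (if (i:ℕ) + k = (m:ℕ) then (1:S) else 0) *
        (if (m:ℕ) + 1 = (j:ℕ) then 1 else 0) =
        (if (i:ℕ) + k = (m:ℕ) then 1 else 0) *
        ((fun m : Fin n => if (m:ℕ) + 1 = (j:ℕ) then (1:S) else 0) m) := fun m => rfl
    rw [Finset.sum_congr rfl fun m _ => this m, sum_boole_left]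
    simp only [Fin.val_mk]
    split_ifs with h1 h2 h2 <;> first | rfl | omega

lemma shiftJT_pow_apply (S : Type*) [Semiring S] (n k : ℕ) (i j : Fin n) :
    (((shiftJ S n)ᵀ) ^ k) i j = if (j:ℕ) + k = (i:ℕ) then 1 else 0 := by
  induction k generalizing i j with
  | zero => simp [Matrix.one_apply, Fin.ext_iff, eq_comm]
  | succ k ih =>
    rw [pow_succ, Matrix.mul_apply]
    simp only [ih]
    simp only [Matrix.transpose_apply, shiftJ, Matrix.of_apply]
    have hc : ∀ m : Fin n, (if (m:ℕ) + k = (i:ℕ) then (1:S) else 0) *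
        (if (j:ℕ) + 1 = (m:ℕ) then 1 else 0) =
        (if (j:ℕ) + 1 = (m:ℕ) then 1 else 0) *
        ((fun m : Fin n => if (m:ℕ) + k = (i:ℕ) then (1:S) else 0) m) := by
      intro m
      simp only
      split_ifs <;> simp
    rw [Finset.sum_congr rfl fun m _ => hc m, sum_boole_left]
    have hi := i.isLt
    simp only [Fin.val_mk]
    split_ifs <;> first | rfl | omega

lemma smul_pow_comm (S : Type*) [Semiring S] (n k : ℕ) (b : S) :
    (shiftJ S n)ᵀ * (b • ((shiftJ S n)ᵀ) ^ k) = (b • ((shiftJ S n)ᵀ) ^ k) * (shiftJ S n)ᵀ := by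
  ext i j
  simp only [Matrix.mul_apply, Matrix.smul_apply, smul_eq_mul, shiftJT_pow_apply]
  simp only [Matrix.transpose_apply, shiftJ, Matrix.of_apply]
  have hL : ∀ m : Fin n, (if (m:ℕ) + 1 = (i:ℕ) then (1:S) else 0) *
      (b * if (j:ℕ) + k = (m:ℕ) then 1 else 0) =
      (if (j:ℕ) + k = (m:ℕ) then 1 else 0) *
      ((fun _ : Fin n => if (j:ℕ) + k + 1 = (i:ℕ) then b else 0) m) := by
    intro m
    simp only
    split_ifs <;> first | omega | simp
  have hR : ∀ m : Fin n, (b * if (m:ℕ) + k = (i:ℕ) then (1:S) else 0) *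
      (if (j:ℕ) + 1 = (m:ℕ) then 1 else 0) =
      (if (j:ℕ) + 1 = (m:ℕ) then 1 else 0) *
      ((fun _ : Fin n => if (j:ℕ) + 1 + k = (i:ℕ) then b else 0) m) := by
    intro m
    simp only
    split_ifs <;> first | omega | simp
  rw [Finset.sum_congr rfl fun m _ => hL m, Finset.sum_congr rfl fun m _ => hR m,
    sum_boole_left, sum_boole_left]
  have hi := i.isLt
  split_ifs <;> first | rfl | omega

/-- The centralizer of the transposed shift matrix `J_nᵀ` in `M_n(S)` consists exactly of the
polynomials `b₀ I + b₁ Jᵀ + ... + b_{n-1} (Jᵀ)^{n-1}` in `J_nᵀ`. -/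
theorem centralizer_shiftJ_transpose (S : Type*) [Semiring S] (n : ℕ) (hn : 2 ≤ n) :
    {A : Matrix (Fin n) (Fin n) S | A * (shiftJ S n)ᵀ = (shiftJ S n)ᵀ * A} =
      {A : Matrix (Fin n) (Fin n) S |
        ∃ b : Fin n → S, A = ∑ k : Fin n, b k • ((shiftJ S n)ᵀ) ^ (k : ℕ)} := by
  ext A
  simp only [Set.mem_setOf_eq]
  constructor
  · intro hA
    -- entrywise commutation relation
    have rel : ∀ (i : Fin n) (j : ℕ) (hj : j + 1 < n),
        A i ⟨j+1, hj⟩ = if h : 1 ≤ (i:ℕ) then A ⟨(i:ℕ)-1, by omega⟩ ⟨j, by omega⟩ else 0 := by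
      intro i j hj
      have h1 := congrFun (congrFun hA i) ⟨j, by omega⟩
      simp only [Matrix.mul_apply, Matrix.transpose_apply, shiftJ, Matrix.of_apply,
        Fin.val_mk] at h1
      rw [sum_boole_right (j+1) (fun k => A i k), dif_pos hj] at h1
      rw [h1]
      by_cases hi : 1 ≤ (i:ℕ)
      · rw [dif_pos hi]
        have hc : ∀ k : Fin n, (if (k:ℕ) + 1 = (i:ℕ) then (1:S) else 0) * A k ⟨j, by omega⟩ =
            (if (i:ℕ) - 1 = (k:ℕ) then 1 else 0) *
              ((fun k : Fin n => A k ⟨j, by omega⟩) k) := by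
          intro k
          simp only
          congr 1
          split_ifs <;> first | rfl | omega
        rw [Finset.sum_congr rfl fun k _ => hc k, sum_boole_left,
          dif_pos (by omega : (i:ℕ)-1 < n)]
      · rw [dif_neg hi]
        apply Finset.sum_eq_zero
        intro k _
        rw [if_neg (by omega), zero_mul]
    -- main induction: A is constant along diagonals, zero above diagonal
    have main : ∀ (j : ℕ) (hj : j < n) (i : ℕ) (hi : i < n),
        A ⟨i, hi⟩ ⟨j, hj⟩ =
          if hij : j ≤ i then A ⟨i-j, by omega⟩ ⟨0, by omega⟩ else 0 := by
      intro j
      induction j with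
      | zero =>
        intro hj i hi
        rw [dif_pos (Nat.zero_le _)]
        congr 1
      | succ j ih =>
        intro hj i hi
        rw [rel ⟨i, hi⟩ j hj]
        simp only [Fin.val_mk]
        by_cases hig : 1 ≤ i
        · rw [dif_pos hig, ih (by omega)]
          by_cases hij : j + 1 ≤ i
          · rw [dif_pos (by omega : j ≤ i - 1), dif_pos hij]
            congr 1
            exact Fin.ext (by simp only [Fin.val_mk]; omega)
          · rw [dif_neg (by omega), dif_neg hij]
        · rw [dif_neg (by simpa using hig), dif_neg (by simp; omega)]
    refine ⟨fun k => A k ⟨0, by omega⟩, ?_⟩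
    ext i j
    rw [Matrix.sum_apply]
    have hterm : ∀ k : Fin n, (A k ⟨0, by omega⟩ • ((shiftJ S n)ᵀ) ^ (k:ℕ)) i j =
        (if (i:ℕ) - (j:ℕ) = (k:ℕ) ∧ (j:ℕ) ≤ (i:ℕ) then (1:S) else 0) *
          ((fun k : Fin n => A k ⟨0, by omega⟩) k) := by
      intro k
      rw [Matrix.smul_apply, shiftJT_pow_apply, smul_eq_mul]
      simp only
      split_ifs <;> first | (rw [mul_one, one_mul]) | (rw [mul_zero, zero_mul]) | omega
    rw [Finset.sum_congr rfl fun k _ => hterm k]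
    have hstep := main (j:ℕ) j.isLt (i:ℕ) i.isLt
    simp only [Fin.eta] at hstep
    rw [hstep]
    by_cases hij : (j:ℕ) ≤ (i:ℕ)
    · have hc : ∀ k : Fin n,
          (if (i:ℕ) - (j:ℕ) = (k:ℕ) ∧ (j:ℕ) ≤ (i:ℕ) then (1:S) else 0) *
            ((fun k : Fin n => A k ⟨0, by omega⟩) k) =
          (if (i:ℕ) - (j:ℕ) = (k:ℕ) then 1 else 0) *
            ((fun k : Fin n => A k ⟨0, by omega⟩) k) := by
        intro k; congr 1; split_ifs <;> first | rfl | omega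
      rw [Finset.sum_congr rfl fun k _ => hc k, sum_boole_left,
        dif_pos (by omega : (i:ℕ)-(j:ℕ) < n), dif_pos hij]
    · rw [dif_neg hij]
      symm
      apply Finset.sum_eq_zero
      intro k _
      rw [if_neg (by omega), zero_mul]
  · rintro ⟨b, rfl⟩
    rw [Finset.sum_mul, Finset.mul_sum]
    apply Finset.sum_congr rfl
    intro k _
    exact (smul_pow_comm S n (k:ℕ) (b k)).symm
end

section
/- The commuting graph of the semiring of 2 × 2 matrices over the binary Boolean semiring 𝓑 has infinite diameter (equivalently, Γ(M_2(𝓑)) is disconnected). -/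
/-!
In the commuting graph of `M_2(𝓑)` the diagonal vertices are closed under adjacency. A diagonal
vertex `diag(a, b)` has `a ≠ b`, since scalar matrices are central, so `{a, b} = {0, 1}`; then
`diag(a, b) Y = Y diag(a, b)` reads `a Y₁₂ = Y₁₂ b` and `b Y₂₁ = Y₂₁ a`, which forces both
off-diagonal entries of `Y` to vanish. Hence no path joins `E₁₁` to the non-diagonal `E₁₂`.
-/

/-- The commuting graph of the semiring of `n × n` matrices over `R`: vertices are the
noncentral matrices, and two distinct vertices are adjacent iff they commute. -/
def commGraph (R : Type*) [Semiring R] (n : ℕ) :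
    SimpleGraph {X : Matrix (Fin n) (Fin n) R // ¬ ∀ Y, X * Y = Y * X} where
  Adj X Y := X ≠ Y ∧ X.1 * Y.1 = Y.1 * X.1
  symm := ⟨fun _ _ h => ⟨fun e => h.1 e.symm, h.2.symm⟩⟩
  loopless := ⟨fun _ h => h.1 rfl⟩

namespace SimpleGraph

variable {V : Type*} {G : SimpleGraph V} {S : Set V} {u v : V}

lemma Reachable.mem_of_adj_mem (hS : ∀ ⦃x y⦄, G.Adj x y → x ∈ S → y ∈ S)
    (h : G.Reachable u v) (hu : u ∈ S) : v ∈ S := by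
  rw [reachable_iff_reflTransGen] at h
  induction h with
  | refl => exact hu
  | tail _ hxy ih => exact hS hxy ih

lemma ediam_eq_top_of_adj_mem (hS : ∀ ⦃x y⦄, G.Adj x y → x ∈ S → y ∈ S)
    (hu : u ∈ S) (hv : v ∉ S) : G.ediam = ⊤ :=
  ediam_eq_top_of_not_preconnected fun h => hv ((h u v).mem_of_adj_mem hS hu)

end SimpleGraph

namespace Matrix

variable {n R : Type*} [Fintype n] [DecidableEq n]

lemma diagonal_mul_single_ne [Semiring R] {d : n → R} {i j : n} (h : d i ≠ d j) :
    diagonal d * single i j 1 ≠ single i j 1 * diagonal d := fun e =>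
  h (by simpa [diagonal_mul, mul_diagonal] using congr_fun (congr_fun e i) j)

lemma IsDiag.exists_diag_ne [CommSemiring R] {X : Matrix n n R} (hX : X.IsDiag)
    (hc : ¬ ∀ Y, X * Y = Y * X) : ∃ i j, X i i ≠ X j j := by
  by_contra! h
  refine hc fun Y => ?_
  rw [← hX.diagonal_diag]
  ext i j
  rw [diagonal_mul, mul_diagonal, diag_apply, diag_apply, h j i, mul_comm]

lemma IsDiag.apply_eq_zero_of_commute [Semiring R] (hmem : ∀ x : R, x = 0 ∨ x = 1)
    {X Y : Matrix n n R} (hX : X.IsDiag) (hXY : X * Y = Y * X) {i j : n}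
    (hij : X i i ≠ X j j) : Y i j = 0 := by
  have h : X i i * Y i j = Y i j * X j j := by
    have := congr_fun (congr_fun hXY i) j
    rwa [← hX.diagonal_diag, diagonal_mul, mul_diagonal] at this
  rcases hmem (X i i) with hi | hi <;> rcases hmem (X j j) with hj | hj <;> simp_all

lemma IsDiag.isDiag_of_commute_fin_two [CommSemiring R] (hmem : ∀ x : R, x = 0 ∨ x = 1)
    {X Y : Matrix (Fin 2) (Fin 2) R} (hX : X.IsDiag) (hc : ¬ ∀ Z, X * Z = Z * X)
    (hXY : X * Y = Y * X) : Y.IsDiag := by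
  obtain ⟨i₀, j₀, hne⟩ := hX.exists_diag_ne hc
  have h01 : X 0 0 ≠ X 1 1 := by fin_cases i₀ <;> fin_cases j₀ <;> simp_all [ne_comm]
  intro i j hij
  apply hX.apply_eq_zero_of_commute hmem hXY
  fin_cases i <;> fin_cases j <;> simp_all [ne_comm]

end Matrix

theorem diam_commGraph_M2_bool_general (B : Type*) [CommSemiring B] (h01 : (0 : B) ≠ 1)
    (hmem : ∀ x : B, x = 0 ∨ x = 1) :
    (commGraph B 2).ediam = ⊤ := by
  set E₁₁ : Matrix (Fin 2) (Fin 2) B := Matrix.diagonal (Pi.single 0 1)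
  set E₁₂ : Matrix (Fin 2) (Fin 2) B := Matrix.single 0 1 1
  have hE : E₁₁ * E₁₂ ≠ E₁₂ * E₁₁ := Matrix.diagonal_mul_single_ne (by simpa using h01.symm)
  refine SimpleGraph.ediam_eq_top_of_adj_mem (S := {X | X.1.IsDiag})
    (u := ⟨E₁₁, fun h => hE (h _)⟩) (v := ⟨E₁₂, fun h => hE (h _).symm⟩) ?_
    (Matrix.isDiag_diagonal _) ?_
  · rintro X Y ⟨-, hXY⟩ hX
    exact hX.isDiag_of_commute_fin_two hmem X.2 hXY
  · intro h
    have h10 : (1 : B) = 0 := by simpa [E₁₂] using h (i := 0) (j := 1) (by decide)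
    exact h01 h10.symm

/-- The commuting graph of `M_2(𝓑)` over the binary Boolean semiring has infinite diameter. -/
theorem diam_commGraph_M2_bool (B : Type*) [CommSemiring B] (h01 : (0 : B) ≠ 1)
    (hmem : ∀ x : B, x = 0 ∨ x = 1) (h11 : (1 : B) + 1 = 1) :
    (commGraph B 2).ediam = ⊤ :=
  diam_commGraph_M2_bool_general B h01 hmem
end

section
/- In the commuting graph Γ(M_3(𝓑)) over the binary Boolean semiring, the distance between the matrices A = E_{1,3} + E_{3,1} + E_{3,2} and B = E_{1,1} + E_{2,3} is at least 4. -/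
/-!
A walk `A = X₀, X₁, X₂, X₃ = B` of length at most 3 (padded with its endpoint) gives noncentral
`X₁` commuting with `A` and `X₂` commuting with `B` that commute with each other. The centralizer
of `A` consists of the matrices `[[p+s, p, t], [0, s, 0], [t, t, p+s]]` and that of `B` of the
matrices `[[a, 0, 0], [0, b, c], [0, 0, b]]`; when all entries are `0` or `1`, such matrices only
commute if one of them is scalar.
-/

lemma commGraph.commute_getVert_succ {R : Type*} [Semiring R] {n : ℕ}
    {u v : {X : Matrix (Fin n) (Fin n) R // ¬ ∀ Y, X * Y = Y * X}}
    (p : (commGraph R n).Walk u v) (i : ℕ) :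
    Commute (p.getVert i).1 (p.getVert (i + 1)).1 := by
  by_cases hi : i < p.length
  · exact (p.adj_getVert_succ hi).2
  · rw [p.getVert_of_length_le (not_lt.mp hi), p.getVert_of_length_le (by omega)]

section FinThree

variable {R : Type*} [CommSemiring R]

lemma commute_scalar_fin_three (s : R) (Z : Matrix (Fin 3) (Fin 3) R) :
    Commute !![s, 0, 0; 0, s, 0; 0, 0, s] Z := by
  have hs : !![s, 0, 0; 0, s, 0; 0, 0, s] = Matrix.scalar (Fin 3) s := by
    ext i j
    fin_cases i <;> fin_cases j <;> simp
  rw [hs]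
  exact Matrix.scalar_commute s (Commute.all s) Z

lemma eq_of_commute_A {X : Matrix (Fin 3) (Fin 3) R}
    (hX : Commute X !![0, 0, 1; 0, 0, 0; 1, 1, 0]) :
    X = !![X 0 1 + X 1 1, X 0 1, X 0 2; 0, X 1 1, 0; X 0 2, X 0 2, X 0 1 + X 1 1] := by
  have h := hX.eq
  rw [X.eta_fin_three] at h
  simp only [Matrix.mul_fin_three, mul_zero, zero_mul, mul_one, one_mul, add_zero, zero_add,
    EmbeddingLike.apply_eq_iff_eq, Matrix.vecCons_inj, and_true] at h
  ext i j
  fin_cases i <;> fin_cases j <;> simp <;> grind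

lemma eq_of_commute_B {Y : Matrix (Fin 3) (Fin 3) R}
    (hY : Commute Y !![1, 0, 0; 0, 0, 1; 0, 0, 0]) :
    Y = !![Y 0 0, 0, 0; 0, Y 1 1, Y 1 2; 0, 0, Y 1 1] := by
  have h := hY.eq
  rw [Y.eta_fin_three] at h
  simp only [Matrix.mul_fin_three, mul_zero, zero_mul, mul_one, one_mul, add_zero, zero_add,
    EmbeddingLike.apply_eq_iff_eq, Matrix.vecCons_inj, and_true] at h
  ext i j
  fin_cases i <;> fin_cases j <;> simp <;> grind

lemma scalar_or_scalar_of_commute {p s t a b c : R} (hp : p = 0 ∨ p = 1) (ht : t = 0 ∨ t = 1)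
    (h : Commute !![p + s, p, t; 0, s, 0; t, t, p + s] !![a, 0, 0; 0, b, c; 0, 0, b]) :
    (p = 0 ∧ t = 0) ∨ (c = 0 ∧ b = a) := by
  have h := h.eq
  simp only [Matrix.mul_fin_three, mul_zero, zero_mul, add_zero, zero_add,
    EmbeddingLike.apply_eq_iff_eq, Matrix.vecCons_inj, and_true] at h
  obtain ⟨⟨-, h01, h02⟩, ⟨h10, -⟩, -⟩ := h
  rcases ht with rfl | rfl
  · rcases hp with rfl | rfl
    · exact .inl ⟨rfl, rfl⟩
    · simp only [one_mul, mul_one, mul_zero, zero_mul, add_zero] at h01 h02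
      exact .inr ⟨h02, h01⟩
  · simp only [mul_one] at h10 h02
    rw [← h10, mul_zero, zero_add, one_mul] at h02
    exact .inr ⟨h10.symm, h02⟩

lemma central_or_central_of_commute (hmem : ∀ x : R, x = 0 ∨ x = 1)
    {X Y : Matrix (Fin 3) (Fin 3) R} (hXA : Commute X !![0, 0, 1; 0, 0, 0; 1, 1, 0])
    (hYB : Commute Y !![1, 0, 0; 0, 0, 1; 0, 0, 0]) (hXY : Commute X Y) :
    (∀ Z, Commute X Z) ∨ (∀ Z, Commute Y Z) := by
  rw [eq_of_commute_A hXA] at hXY ⊢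
  rw [eq_of_commute_B hYB] at hXY ⊢
  rcases scalar_or_scalar_of_commute (hmem _) (hmem _) hXY with ⟨hp, ht⟩ | ⟨hc, hb⟩
  · rw [hp, ht, zero_add]
    exact .inl (commute_scalar_fin_three _)
  · rw [hc, hb]
    exact .inr (commute_scalar_fin_three _)

end FinThree

theorem dist_ge_four_M3_bool_general (B : Type*) [CommSemiring B]
    (hmem : ∀ x : B, x = 0 ∨ x = 1)
    (A C : Matrix (Fin 3) (Fin 3) B)
    (hAdef : A = Matrix.single 0 2 1 + Matrix.single 2 0 1 +
      Matrix.single 2 1 1)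
    (hCdef : C = Matrix.single 0 0 1 + Matrix.single 1 2 1)
    (hA : ¬ ∀ Y, A * Y = Y * A) (hC : ¬ ∀ Y, C * Y = Y * C) :
    4 ≤ (commGraph B 3).edist ⟨A, hA⟩ ⟨C, hC⟩ := by
  have hA3 : A = !![0, 0, 1; 0, 0, 0; 1, 1, 0] := by
    subst hAdef; ext i j; fin_cases i <;> fin_cases j <;> simp
  have hC3 : C = !![1, 0, 0; 0, 0, 1; 0, 0, 0] := by
    subst hCdef; ext i j; fin_cases i <;> fin_cases j <;> simp
  subst hA3 hC3
  refine le_iInf fun p => ?_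
  by_contra! hlt
  have hlen : p.length ≤ 3 := Nat.lt_succ_iff.mp (by exact_mod_cast hlt)
  have hXA := (commGraph.commute_getVert_succ p 0).symm
  have hYC := commGraph.commute_getVert_succ p 2
  rw [p.getVert_zero] at hXA
  rw [p.getVert_of_length_le (i := 2 + 1) hlen] at hYC
  rcases central_or_central_of_commute hmem hXA hYC (commGraph.commute_getVert_succ p 1)
    with h | h
  · exact (p.getVert 1).2 h
  · exact (p.getVert 2).2 h

/-- In `Γ(M_3(𝓑))`, the distance between `A = E_{1,3} + E_{3,1} + E_{3,2}` and
`B = E_{1,1} + E_{2,3}` is at least 4. -/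
theorem dist_ge_four_M3_bool (B : Type*) [CommSemiring B] (h01 : (0 : B) ≠ 1)
    (hmem : ∀ x : B, x = 0 ∨ x = 1) (h11 : (1 : B) + 1 = 1)
    (A C : Matrix (Fin 3) (Fin 3) B)
    (hAdef : A = Matrix.single 0 2 1 + Matrix.single 2 0 1 +
      Matrix.single 2 1 1)
    (hCdef : C = Matrix.single 0 0 1 + Matrix.single 1 2 1)
    (hA : ¬ ∀ Y, A * Y = Y * A) (hC : ¬ ∀ Y, C * Y = Y * C) :
    4 ≤ (commGraph B 3).edist ⟨A, hA⟩ ⟨C, hC⟩ :=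
  dist_ge_four_M3_bool_general B hmem A C hAdef hCdef hA hC
end

section
/- Let S be a nontrivial commutative entire antinegative semiring and let supp : M_n(S) → M_n(𝓑) be the entrywise support map, supp(A)_{i,j} = 0 if A_{i,j} = 0 and supp(A)_{i,j} = 1 otherwise, where 𝓑 is the binary Boolean semiring. If A, B ∈ M_n(S) satisfy AB = BA, then supp(A)·supp(B) = supp(B)·supp(A) in M_n(𝓑). -/
/-! The support map `S → 𝓑` is multiplicative because `S` is entire and additive because `S` is
antinegative and `1 + 1 = 1` in `𝓑`. It is thus a non-unital semiring homomorphism, and `matrixSupp`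
is its entrywise application, so it carries `A * A' = A' * A` to the supports. -/

open Classical in
/-- The entrywise support of a matrix: `supp(A)_{i,j} = 0` if `A_{i,j} = 0` and `1` otherwise. -/
noncomputable def matrixSupp {S : Type*} [Zero S] (B : Type*) [Zero B] [One B] {n : ℕ}
    (A : Matrix (Fin n) (Fin n) S) : Matrix (Fin n) (Fin n) B :=
  Matrix.of fun i j => if A i j = 0 then 0 else 1

open Classical in
noncomputable def suppHom {S : Type*} [NonUnitalNonAssocSemiring S]
    (hentire : ∀ a b : S, a * b = 0 → a = 0 ∨ b = 0)
    (hanti : ∀ a b : S, a + b = 0 → a = 0 ∧ b = 0)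
    (B : Type*) [NonAssocSemiring B] (h11 : (1 : B) + 1 = 1) : S →ₙ+* B where
  toFun a := if a = 0 then 0 else 1
  map_zero' := if_pos rfl
  map_add' a b := by
    by_cases ha : a = 0
    · simp [ha]
    by_cases hb : b = 0
    · simp [hb]
    have hab : a + b ≠ 0 := fun h => ha (hanti a b h).1
    simp [ha, hb, hab, h11]
  map_mul' a b := by
    by_cases ha : a = 0
    · simp [ha]
    by_cases hb : b = 0
    · simp [hb]
    have hab : a * b ≠ 0 := fun h => (hentire a b h).elim ha hb
    simp [ha, hb, hab]

theorem matrixSupp_eq_map {S : Type*} [NonUnitalNonAssocSemiring S]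
    (hentire : ∀ a b : S, a * b = 0 → a = 0 ∨ b = 0)
    (hanti : ∀ a b : S, a + b = 0 → a = 0 ∧ b = 0)
    (B : Type*) [NonAssocSemiring B] (h11 : (1 : B) + 1 = 1) {n : ℕ}
    (A : Matrix (Fin n) (Fin n) S) :
    matrixSupp B A = A.map (suppHom hentire hanti B h11) :=
  rfl

theorem matrixSupp_mul {S : Type*} [NonUnitalNonAssocSemiring S]
    (hentire : ∀ a b : S, a * b = 0 → a = 0 ∨ b = 0)
    (hanti : ∀ a b : S, a + b = 0 → a = 0 ∧ b = 0)
    (B : Type*) [NonAssocSemiring B] (h11 : (1 : B) + 1 = 1) {n : ℕ}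
    (A A' : Matrix (Fin n) (Fin n) S) :
    matrixSupp B (A * A') = matrixSupp B A * matrixSupp B A' := by
  simp only [matrixSupp_eq_map hentire hanti B h11, Matrix.map_mul]

theorem supp_commute_general (S : Type*) [CommSemiring S]
    (hentire : ∀ a b : S, a * b = 0 → a = 0 ∨ b = 0)
    (hanti : ∀ a b : S, a + b = 0 → a = 0 ∧ b = 0)
    (B : Type*) [CommSemiring B] (h11 : (1 : B) + 1 = 1)
    (n : ℕ) (A A' : Matrix (Fin n) (Fin n) S) (hcomm : A * A' = A' * A) :
    matrixSupp B A * matrixSupp B A' = matrixSupp B A' * matrixSupp B A := by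
  rw [← matrixSupp_mul hentire hanti B h11, hcomm, matrixSupp_mul hentire hanti B h11]

/-- If `S` is a nontrivial commutative entire antinegative semiring and `A, B ∈ M_n(S)`
commute, then their supports commute in `M_n(𝓑)` over the binary Boolean semiring `𝓑`. -/
theorem supp_commute (S : Type*) [CommSemiring S] [Nontrivial S]
    (hentire : ∀ a b : S, a * b = 0 → a = 0 ∨ b = 0)
    (hanti : ∀ a b : S, a + b = 0 → a = 0 ∧ b = 0)
    (B : Type*) [CommSemiring B] (h01 : (0 : B) ≠ 1)
    (hmem : ∀ x : B, x = 0 ∨ x = 1) (h11 : (1 : B) + 1 = 1)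
    (n : ℕ) (A A' : Matrix (Fin n) (Fin n) S) (hcomm : A * A' = A' * A) :
    matrixSupp B A * matrixSupp B A' = matrixSupp B A' * matrixSupp B A :=
  supp_commute_general S hentire hanti B h11 n A A' hcomm
end

section
/- Let S be a nontrivial commutative entire antinegative semiring and n ≥ 3. Then the diameter of the commuting graph Γ(M_n(S)) is at least 4. -/
/-!
Let `P` be the matrix with ones at `(0, 0)` and `(i, i + 1)`, and `Q` its transpose reindexed by
negation in `Fin n`, so that `Q` has ones at `(0, 0)`, `(i, i + 1)` for `i ≥ 1` and `(n - 1, 0)`.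
Over an antinegative semiring a matrix commuting with `P` is scalar as soon as its `(0, 1)` entry
vanishes, and its last row vanishes off the diagonal in any case; the symmetry transfers both facts
to `Q`. So if `C` and `D` are noncentral and commute with `P` and `Q` respectively, then `C₀₁ ≠ 0`
and `D_{n-1,0} ≠ 0`. Now `(C * D)_{n-1,1} = 0`, whereas `(D * C)_{n-1,1}` contains the term
`D_{n-1,0} * C₀₁`, nonzero in an entire semiring, and no cancellation is possible. Hence no walk
`P – C – D – Q` of length at most three exists.
-/

open Matrix Finset

namespace Matrix

variable {S : Type*} {m n : ℕ}

-- Extending by zero lets all index arithmetic take place in `ℕ`, free of bound proofs.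
def natEntry [Zero S] (M : Matrix (Fin m) (Fin n) S) (i j : ℕ) : S :=
  if h : i < m ∧ j < n then M ⟨i, h.1⟩ ⟨j, h.2⟩ else 0

section natEntry

variable [Zero S] {M : Matrix (Fin m) (Fin n) S} {i j : ℕ}

theorem natEntry_of_lt (hi : i < m) (hj : j < n) : M.natEntry i j = M ⟨i, hi⟩ ⟨j, hj⟩ :=
  dif_pos ⟨hi, hj⟩

theorem natEntry_of_le_left (hi : m ≤ i) : M.natEntry i j = 0 :=
  dif_neg fun h => (h.1.trans_le hi).false

theorem natEntry_of_le_right (hj : n ≤ j) : M.natEntry i j = 0 :=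
  dif_neg fun h => (h.2.trans_le hj).false

theorem natEntry_val (i : Fin m) (j : Fin n) : M.natEntry i j = M i j :=
  natEntry_of_lt i.isLt j.isLt

end natEntry

theorem natEntry_mul [NonUnitalNonAssocSemiring S] {l : ℕ} (M : Matrix (Fin m) (Fin l) S)
    (N : Matrix (Fin l) (Fin n) S) {i j : ℕ} (hi : i < m) (hj : j < n) :
    (M * N).natEntry i j = ∑ k ∈ range l, M.natEntry i k * N.natEntry k j := by
  rw [natEntry_of_lt hi hj, mul_apply, ← Fin.sum_univ_eq_sum_range]
  simp only [← natEntry_val (M := M) ⟨i, hi⟩, ← natEntry_val (M := N) _ ⟨j, hj⟩]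

-- Column `j` is the basis vector `e (j - 1)`; as `0 - 1 = 0` in `ℕ`, column `0` is `e 0`.
def predMatrix (S : Type*) [Zero S] [One S] (n : ℕ) : Matrix (Fin n) (Fin n) S :=
  of fun i j => if (i : ℕ) = j - 1 then 1 else 0

section predMatrix

variable [NonAssocSemiring S] (C : Matrix (Fin n) (Fin n) S) {i j : ℕ}

theorem natEntry_predMatrix {k : ℕ} (hk : k < n) (hj : j < n) :
    (predMatrix S n).natEntry k j = if k = j - 1 then 1 else 0 :=
  natEntry_of_lt hk hj

theorem natEntry_mul_predMatrix (hi : i < n) (hj : j < n) :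
    (C * predMatrix S n).natEntry i j = C.natEntry i (j - 1) := by
  rw [natEntry_mul _ _ hi hj]
  calc ∑ k ∈ range n, C.natEntry i k * (predMatrix S n).natEntry k j
      = ∑ k ∈ range n, if k = j - 1 then C.natEntry i k else 0 := by
        refine sum_congr rfl fun k hk => ?_
        rw [natEntry_predMatrix (mem_range.1 hk) hj, mul_ite, mul_one, mul_zero]
    _ = C.natEntry i (j - 1) := by
        rw [sum_ite_eq', if_pos (mem_range.2 (by omega))]

theorem natEntry_predMatrix_mul (hi : i < n) (hj : j < n) :
    (predMatrix S n * C).natEntry i j =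
      (if i = 0 then C.natEntry 0 j else 0) + C.natEntry (i + 1) j := by
  obtain ⟨n, rfl⟩ : ∃ n', n = n' + 1 := ⟨n - 1, by omega⟩
  rw [natEntry_mul _ _ hi hj, sum_range_succ', add_comm]
  congr 1
  · rw [natEntry_predMatrix hi (by omega)]
    split_ifs <;> simp_all
  · calc ∑ k ∈ range n, (predMatrix S (n + 1)).natEntry i (k + 1) * C.natEntry (k + 1) j
        = ∑ k ∈ range n, if i = k then C.natEntry (k + 1) j else 0 := by
          refine sum_congr rfl fun k hk => ?_
          rw [natEntry_predMatrix hi (by have := mem_range.1 hk; omega), ite_mul, one_mul, zero_mul,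
            Nat.add_sub_cancel]
      _ = C.natEntry (i + 1) j := by
          rw [sum_ite_eq]
          split_ifs with h
          · rfl
          · exact (natEntry_of_le_left (by rw [mem_range] at h; omega)).symm

end predMatrix

section centralizer

variable [Semiring S] {C : Matrix (Fin n) (Fin n) S}

theorem natEntry_pred_of_commute_predMatrix (hC : Commute C (predMatrix S n)) {i j : ℕ}
    (hi : i < n) (hj : j < n) :
    (if i = 0 then C.natEntry 0 j else 0) + C.natEntry (i + 1) j = C.natEntry i (j - 1) := by
  rw [← natEntry_predMatrix_mul C hi hj, ← natEntry_mul_predMatrix C hi hj, hC.eq]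

theorem natEntry_last_of_commute_predMatrix (hC : Commute C (predMatrix S n)) {k : ℕ}
    (hk : k ≠ n - 1) : C.natEntry (n - 1) k = 0 := by
  rcases le_or_gt n k with hnk | hkn
  · exact natEntry_of_le_right hnk
  have h := natEntry_pred_of_commute_predMatrix hC (i := n - 1) (j := k + 1)
    (by omega) (by omega)
  rwa [if_neg (by omega), natEntry_of_le_left (by omega), add_zero, Nat.add_sub_cancel,
    eq_comm] at h

theorem natEntry_col_zero_of_commute_predMatrix (hC : Commute C (predMatrix S n)) {i : ℕ}
    (hi : 0 < i) : C.natEntry i 0 = 0 := by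
  induction h : n - i generalizing i with
  | zero => exact natEntry_of_le_left (by omega)
  | succ d ih =>
    have h' := natEntry_pred_of_commute_predMatrix hC (i := i) (j := 0) (by omega) (by omega)
    rw [if_neg hi.ne', zero_add, ih (by omega) (by omega), Nat.zero_sub] at h'
    exact h'.symm

variable (hanti : ∀ a b : S, a + b = 0 → a = 0 ∧ b = 0)
include hanti

theorem natEntry_row_zero_of_commute_predMatrix (hC : Commute C (predMatrix S n))
    (h01 : C.natEntry 0 1 = 0) {j : ℕ} (hj : 0 < j) : C.natEntry 0 j = 0 := by
  induction j with
  | zero => exact absurd hj (lt_irrefl 0)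
  | succ j ih =>
    rcases Nat.eq_zero_or_pos j with rfl | hj
    · exact h01
    rcases le_or_gt n (j + 1) with hn | hn
    · exact natEntry_of_le_right hn
    have h := natEntry_pred_of_commute_predMatrix hC (i := 0) (j := j + 1) (by omega) hn
    rw [if_pos rfl, Nat.add_sub_cancel, ih hj] at h
    exact (hanti _ _ h).1

theorem eq_scalar_of_commute_predMatrix (hC : Commute C (predMatrix S n))
    (h01 : C.natEntry 0 1 = 0) : C = scalar (Fin n) (C.natEntry 0 0) := by
  have key : ∀ i j, i < n → C.natEntry i j = if i = j then C.natEntry 0 0 else 0 := by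
    intro i
    induction i with
    | zero =>
      rintro (_ | j) -
      · rfl
      · rw [natEntry_row_zero_of_commute_predMatrix hanti hC h01 j.succ_pos,
          if_neg j.succ_ne_zero.symm]
    | succ i ih =>
      rintro (_ | j) hi
      · rw [natEntry_col_zero_of_commute_predMatrix hC i.succ_pos, if_neg i.succ_ne_zero]
      rcases le_or_gt n (j + 1) with hn | hn
      · rw [natEntry_of_le_right hn, if_neg (by omega)]
      have h := natEntry_pred_of_commute_predMatrix hC (i := i) (j := j + 1) (by omega) hn
      have hrow : (if i = 0 then C.natEntry 0 (j + 1) else 0) = 0 := by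
        split_ifs
        · exact natEntry_row_zero_of_commute_predMatrix hanti hC h01 j.succ_pos
        · rfl
      rw [Nat.add_sub_cancel, ih j (by omega), hrow, zero_add] at h
      simp only [h, Nat.add_right_cancel_iff]
  ext i j
  rw [← natEntry_val (M := C), key i j i.isLt, scalar_apply, diagonal_apply]
  simp only [Fin.val_inj]

end centralizer

theorem predMatrix_not_central [Semiring S] [Nontrivial S] (hn : 2 ≤ n) :
    ¬ ∀ Y, Commute (predMatrix S n) Y := fun h => by
  have h0 := natEntry_last_of_commute_predMatrix (h (of fun _ _ => (1 : S))).symm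
    (k := 0) (by omega)
  rw [natEntry_of_lt (by omega) (by omega)] at h0
  exact one_ne_zero h0

def negTranspose (M : Matrix (Fin n) (Fin n) S) : Matrix (Fin n) (Fin n) S :=
  Mᵀ.submatrix (Equiv.neg (Fin n)) (Equiv.neg (Fin n))

@[simp]
theorem negTranspose_negTranspose (M : Matrix (Fin n) (Fin n) S) :
    negTranspose (negTranspose M) = M := by
  ext i j
  simp [negTranspose]

theorem negTranspose_injective :
    Function.Injective (negTranspose : Matrix (Fin n) (Fin n) S → _) :=
  Function.LeftInverse.injective negTranspose_negTranspose

theorem natEntry_negTranspose [Zero S] (M : Matrix (Fin n) (Fin n) S) {i j : ℕ} (hi : i < n)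
    (hj : j < n) : (negTranspose M).natEntry i j = M.natEntry ((n - j) % n) ((n - i) % n) := by
  rw [natEntry_of_lt hi hj, natEntry_of_lt (Nat.mod_lt _ (by omega)) (Nat.mod_lt _ (by omega))]
  rfl

section CommSemiring

variable [CommSemiring S]

theorem negTranspose_mul (M N : Matrix (Fin n) (Fin n) S) :
    negTranspose (M * N) = negTranspose N * negTranspose M := by
  rw [negTranspose, transpose_mul, ← submatrix_mul_equiv _ _ _ (Equiv.neg (Fin n))]
  rfl

theorem commute_negTranspose_iff {M N : Matrix (Fin n) (Fin n) S} :
    Commute (negTranspose M) (negTranspose N) ↔ Commute M N := by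
  rw [Commute, SemiconjBy, ← negTranspose_mul, ← negTranspose_mul, negTranspose_injective.eq_iff,
    eq_comm]
  rfl

theorem negTranspose_central_iff {M : Matrix (Fin n) (Fin n) S} :
    (∀ Y, Commute (negTranspose M) Y) ↔ ∀ Y, Commute M Y := by
  refine ⟨fun h Y => ?_, fun h Y => ?_⟩
  · exact commute_negTranspose_iff.1 (h _)
  · rw [← negTranspose_negTranspose Y]
    exact commute_negTranspose_iff.2 (h _)

end CommSemiring

theorem scalar_central [CommSemiring S] (c : S) : ∀ Y, Commute (scalar (Fin n) c) Y :=
  scalar_commute c (Commute.all c)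

theorem not_commute_of_commute_predMatrix [CommSemiring S]
    (hentire : ∀ a b : S, a * b = 0 → a = 0 ∨ b = 0)
    (hanti : ∀ a b : S, a + b = 0 → a = 0 ∧ b = 0) (hn : 3 ≤ n)
    {C D : Matrix (Fin n) (Fin n) S} (hC : Commute C (predMatrix S n))
    (hD : Commute D (negTranspose (predMatrix S n)))
    (hC_central : ¬ ∀ Y, Commute C Y) (hD_central : ¬ ∀ Y, Commute D Y) : ¬ Commute C D := by
  have hD' : Commute (negTranspose D) (predMatrix S n) := by
    rwa [← commute_negTranspose_iff, negTranspose_negTranspose]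
  have hC01 : C.natEntry 0 1 ≠ 0 := fun h => by
    rw [eq_scalar_of_commute_predMatrix hanti hC h] at hC_central
    exact hC_central (scalar_central _)
  have hD01 : D.negTranspose.natEntry 0 1 ≠ 0 := fun h => by
    rw [← negTranspose_central_iff, eq_scalar_of_commute_predMatrix hanti hD' h] at hD_central
    exact hD_central (scalar_central _)
  have hD_last0 : D.natEntry (n - 1) 0 = D.negTranspose.natEntry 0 1 := by
    rw [natEntry_negTranspose _ (by omega) (by omega), Nat.sub_zero, Nat.mod_self,
      Nat.mod_eq_of_lt (show n - 1 < n by omega)]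
  have hD_last1 : D.natEntry (n - 1) 1 = 0 := by
    rw [← natEntry_last_of_commute_predMatrix hD' (k := 1) (by omega),
      natEntry_negTranspose _ (by omega) (by omega), show n - (n - 1) = 1 by omega,
      Nat.mod_eq_of_lt (show 1 < n by omega), Nat.mod_eq_of_lt (show n - 1 < n by omega)]
  intro hCD
  have h := congrArg (natEntry · (n - 1) 1) hCD.eq
  simp only [natEntry_mul _ _ (show n - 1 < n by omega) (show 1 < n by omega)] at h
  rw [sum_eq_zero fun k _ => ?_, ← add_sum_erase _ _ (mem_range.2 (show 0 < n by omega)),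
    eq_comm] at h
  · rcases hentire _ _ (hanti _ _ h).1 with h0 | h0
    · exact hD01 (hD_last0 ▸ h0)
    · exact hC01 h0
  · rcases eq_or_ne k (n - 1) with rfl | hk
    · rw [hD_last1, mul_zero]
    · rw [natEntry_last_of_commute_predMatrix hC hk, zero_mul]

end Matrix

namespace SimpleGraph

variable {V : Type*} {G : SimpleGraph V}

theorem exists_reflGen_chain_of_edist_le {u v : V} {k : ℕ} (h : G.edist u v ≤ k) :
    ∃ f : ℕ → V, f 0 = u ∧ f k = v ∧ ∀ i < k, Relation.ReflGen G.Adj (f i) (f (i + 1)) := by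
  obtain ⟨p, hp⟩ := exists_walk_of_edist_ne_top (h.trans_lt (ENat.natCast_lt_top k)).ne
  have hlen : p.length ≤ k := by exact_mod_cast hp ▸ h
  refine ⟨p.getVert, p.getVert_zero, p.getVert_of_length_le hlen, fun i _ => ?_⟩
  rcases lt_or_ge i p.length with hi | hi
  · exact .single (p.adj_getVert_succ hi)
  · rw [p.getVert_of_length_le hi, p.getVert_of_length_le (by omega)]

end SimpleGraph

theorem commute_of_reflGen_commGraph_adj {R : Type*} [Semiring R] {n : ℕ}
    {X Y : {X : Matrix (Fin n) (Fin n) R // ¬ ∀ Y, X * Y = Y * X}}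
    (h : Relation.ReflGen (commGraph R n).Adj X Y) : Commute X.1 Y.1 := by
  cases h with
  | refl => exact Commute.refl _
  | single h => exact h.2

/-- If `S` is a nontrivial commutative entire antinegative semiring and `n ≥ 3`, then the
diameter of the commuting graph of `M_n(S)` is at least 4. -/
theorem diam_commGraph_ge_four_entire_antineg (S : Type*) [CommSemiring S] [Nontrivial S]
    (hentire : ∀ a b : S, a * b = 0 → a = 0 ∨ b = 0)
    (hanti : ∀ a b : S, a + b = 0 → a = 0 ∧ b = 0)
    (n : ℕ) (hn : 3 ≤ n) :
    4 ≤ (commGraph S n).ediam := by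
  have hP : ¬ ∀ Y, Commute (predMatrix S n) Y := predMatrix_not_central (by omega)
  have hQ : ¬ ∀ Y, Commute (negTranspose (predMatrix S n)) Y := by
    rwa [negTranspose_central_iff]
  refine le_trans ?_ ((commGraph S n).edist_le_ediam (u := ⟨_, hP⟩) (v := ⟨_, hQ⟩))
  by_contra! hlt
  obtain ⟨f, hf0, hf3, hf⟩ :=
    (commGraph S n).exists_reflGen_chain_of_edist_le (k := 3) (Order.le_of_lt_add_one hlt)
  have step (i : ℕ) (hi : i < 3) := commute_of_reflGen_commGraph_adj (hf i hi)
  have h01 := step 0 (by omega)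
  have h23 := step 2 (by omega)
  rw [hf0] at h01
  rw [hf3] at h23
  exact not_commute_of_commute_predMatrix hentire hanti hn h01.symm h23 (f 1).2 (f 2).2
    (step 1 (by omega))
end

section
/- Let E ∈ M_n(𝕋) be the matrix all of whose entries equal 0 ∈ ℝ (the multiplicative identity of 𝕋). A matrix A = [a_{i,j}] ∈ M_n(𝕋) commutes with E if and only if there exists a ∈ 𝕋 such that max_j a_{i,j} = a for every row i = 1, ..., n and max_i a_{i,j} = a for every column j = 1, ..., n. -/
/-- The max-plus tropical semiring `ℝ ∪ {-∞}`, realized as the `Tropical` semiring on the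
order dual of `WithBot ℝ`. -/
noncomputable instance : LinearOrderedAddCommMonoidWithTop ((WithBot ℝ)ᵒᵈ) :=
  { (inferInstance : AddCommMonoid ((WithBot ℝ)ᵒᵈ)),
    (inferInstance : LinearOrder ((WithBot ℝ)ᵒᵈ)),
    (inferInstance : IsOrderedAddMonoid ((WithBot ℝ)ᵒᵈ)),
    (inferInstance : OrderTop ((WithBot ℝ)ᵒᵈ)) with
    top_add' := fun a => WithBot.bot_add a
    isAddLeftRegular_of_ne_top := fun _ ha _ _ h => WithBot.add_left_cancel (α := ℝ) ha h }

abbrev Trop : Type := Tropical ((WithBot ℝ)ᵒᵈ)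

theorem forall_eq_iff_exists_common_value {ι α : Type*} [Nonempty α] (r c : ι → α) :
    (∀ i j, r i = c j) ↔ ∃ a, (∀ i, r i = a) ∧ (∀ j, c j = a) := by
  constructor
  · intro h
    rcases isEmpty_or_nonempty ι with _ | ⟨⟨i₀⟩⟩
    · exact ⟨Classical.arbitrary α, isEmptyElim, isEmptyElim⟩
    · exact ⟨c i₀, fun i => h i i₀, fun j => (h i₀ j).symm.trans (h i₀ i₀)⟩
  · rintro ⟨a, hr, hc⟩ i j
    rw [hr, hc]

namespace Matrix

variable {l m n α : Type*} [NonAssocSemiring α] [Fintype n]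

theorem mul_of_const_one_apply (A : Matrix m n α) (i : m) (j : l) :
    (A * of fun (_ : n) (_ : l) => (1 : α)) i j = ∑ k, A i k := by
  simp [mul_apply]

theorem of_const_one_mul_apply (A : Matrix n m α) (i : l) (j : m) :
    ((of fun (_ : l) (_ : n) => (1 : α)) * A) i j = ∑ k, A k j := by
  simp [mul_apply]

theorem commute_of_const_one_iff (A : Matrix n n α) :
    Commute A (of fun _ _ => (1 : α)) ↔
      ∃ a, (∀ i, ∑ j, A i j = a) ∧ (∀ j, ∑ i, A i j = a) := by
  rw [← forall_eq_iff_exists_common_value, Commute, SemiconjBy, ← Matrix.ext_iff]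
  simp only [mul_of_const_one_apply, of_const_one_mul_apply]

end Matrix

/-- A matrix `A ∈ M_n(𝕋)` commutes with the all-ones matrix `E` (all entries equal to the
multiplicative identity `0 ∈ ℝ` of the tropical semiring) iff there is `a ∈ 𝕋` such that the
maximum of every row of `A` equals `a` and the maximum of every column of `A` equals `a`
(tropical sums are maxima). -/
theorem commute_allOnes_iff (n : ℕ) (A E : Matrix (Fin n) (Fin n) Trop)
    (hE : ∀ i j, E i j = 1) :
    A * E = E * A ↔
      ∃ a : Trop, (∀ i, ∑ j, A i j = a) ∧ (∀ j, ∑ i, A i j = a) := by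
  obtain rfl : E = Matrix.of fun _ _ => (1 : Trop) := Matrix.ext hE
  exact A.commute_of_const_one_iff
end

section
/- Let S be a commutative semiring that is not entire, i.e., there exist nonzero x, y ∈ S with xy = 0. Then for every n ≥ 2, the diameter of the commuting graph Γ(M_n(S)) equals 3. -/
namespace Matrix

variable {ι α : Type*} [Fintype ι] [DecidableEq ι]

theorem apply_pow_apply_pow_of_commute_permMatrix [Semiring α] {σ : Equiv.Perm ι}
    {Z : Matrix ι ι α} (h : Commute (σ.permMatrix α) Z) (k : ℕ) (i j : ι) :
    Z ((σ ^ k) i) ((σ ^ k) j) = Z i j := by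
  have shift : ∀ i j, Z (σ i) (σ j) = Z i j := fun i j => by
    simpa [PEquiv.toMatrix_toPEquiv_mul, PEquiv.mul_toMatrix_toPEquiv] using
      congr_fun₂ h.eq i (σ j)
  induction k generalizing i j with
  | zero => rfl
  | succ k ih => rw [pow_succ', Equiv.Perm.mul_apply, Equiv.Perm.mul_apply, shift, ih]

theorem mem_range_scalar_of_commute_single_of_commute_permMatrix [Semiring α] {i₀ : ι}
    {σ : Equiv.Perm ι} (hσ : σ.IsCycle) (hsupp : σ.support = Finset.univ) {Z : Matrix ι ι α}
    (hsingle : Commute (single i₀ i₀ 1) Z) (hperm : Commute (σ.permMatrix α) Z) :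
    Z ∈ Set.range (scalar ι) := by
  have moves : ∀ i, σ i ≠ i := fun i => Equiv.Perm.mem_support.mp (hsupp ▸ Finset.mem_univ i)
  refine ⟨Z i₀ i₀, Matrix.ext fun i j => ?_⟩
  obtain ⟨k, hk⟩ := hσ.exists_pow_eq (moves i) (moves i₀)
  rw [scalar_apply, ← apply_pow_apply_pow_of_commute_permMatrix hperm k i j, hk]
  obtain rfl | hij := eq_or_ne i j
  · rw [hk, diagonal_apply_eq]
  · have hj : (σ ^ k) j ≠ i₀ := hk ▸ ((σ ^ k).injective.ne hij).symm
    rw [diagonal_apply_ne _ hij, row_eq_zero_of_commute_single hsingle hj]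

theorem not_commute_single_permMatrix [Semiring α] [Nontrivial α] {σ : Equiv.Perm ι}
    {i : ι} (hi : σ i ≠ i) : ¬ Commute (single i i (1 : α)) (σ.permMatrix α) := by
  intro h
  have := congr_fun₂ h.eq i (σ i)
  simp [mul_single_apply_of_ne _ _ _ _ _ hi] at this

theorem exists_commute_smul_notMem_center [CommSemiring α] [Nontrivial ι] {a : α}
    (ha : a ≠ 0) (X : Matrix ι ι α) :
    ∃ U : Matrix ι ι α, a • U ∉ Set.center (Matrix ι ι α) ∧ Commute X (a • U) := by
  by_cases hX : a • X ∈ Set.center (Matrix ι ι α)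
  · obtain ⟨i, j, hij⟩ := exists_pair_ne ι
    refine ⟨single i i 1, fun h => ?_, ?_⟩
    · have key := Semigroup.mem_center_iff.mp h (single i j 1)
      rw [smul_single, smul_eq_mul, mul_one, single_mul_single_of_ne _ _ _ _ hij.symm,
        single_mul_single_same, mul_one] at key
      exact ha (by simpa using congr_fun₂ key i j : (0 : α) = a).symm
    · calc X * (a • single i i 1) = (a • X) * single i i 1 := by
            rw [mul_smul_comm, smul_mul_assoc]
        _ = single i i 1 * (a • X) := (Semigroup.mem_center_iff.mp hX _).symm
        _ = (a • single i i 1) * X := by rw [mul_smul_comm, smul_mul_assoc]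
  · exact ⟨X, hX, (Commute.refl X).smul_right a⟩

end Matrix

open Matrix

theorem forall_mul_comm_iff_mem_center {M : Type*} [Semigroup M] {X : M} :
    (∀ Y, X * Y = Y * X) ↔ X ∈ Set.center M :=
  (forall_congr' fun _ => eq_comm).trans Semigroup.mem_center_iff.symm

namespace commGraph

section Semiring

variable {R : Type*} [Semiring R] {n : ℕ}
  {u v : {X : Matrix (Fin n) (Fin n) R // ¬ ∀ Y, X * Y = Y * X}}

theorem edist_le_one_of_commute (h : Commute u.1 v.1) : (commGraph R n).edist u v ≤ 1 := by
  refine SimpleGraph.edist_le_one_iff_adj_or_eq.mpr ?_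
  by_cases huv : u = v
  · exact .inr huv
  · exact .inl ⟨huv, h⟩

theorem three_le_edist_of_not_commute (huv : ¬ Commute u.1 v.1)
    (hcentral : ∀ Z, Commute u.1 Z → Commute Z v.1 → ∀ Y, Z * Y = Y * Z) :
    3 ≤ (commGraph R n).edist u v := by
  have : 2 < (commGraph R n).edist u v := by
    refine SimpleGraph.two_lt_edist_iff.mpr ⟨?_, fun h => huv h.2, ?_⟩
    · rintro rfl
      exact huv (Commute.refl _)
    · refine Set.eq_empty_of_forall_notMem fun z hz => ?_
      rw [SimpleGraph.mem_commonNeighbors] at hz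
      exact z.2 (hcentral z.1 hz.1.2 hz.2.2.symm)
  exact Order.add_one_le_of_lt this

end Semiring

theorem edist_le_three {S : Type*} [CommSemiring S] {n : ℕ} (hn : 2 ≤ n) {x y : S}
    (hx : x ≠ 0) (hy : y ≠ 0) (hxy : x * y = 0)
    (u v : {X : Matrix (Fin n) (Fin n) S // ¬ ∀ Y, X * Y = Y * X}) :
    (commGraph S n).edist u v ≤ 3 := by
  have : Nontrivial (Fin n) := Fin.nontrivial_iff_two_le.mpr hn
  obtain ⟨U, hU, huU⟩ := exists_commute_smul_notMem_center hx u.1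
  obtain ⟨V, hV, hvV⟩ := exists_commute_smul_notMem_center hy v.1
  let a : {X : Matrix (Fin n) (Fin n) S // ¬ ∀ Y, X * Y = Y * X} :=
    ⟨x • U, forall_mul_comm_iff_mem_center.not.mpr hU⟩
  let b : {X : Matrix (Fin n) (Fin n) S // ¬ ∀ Y, X * Y = Y * X} :=
    ⟨y • V, forall_mul_comm_iff_mem_center.not.mpr hV⟩
  have hab : Commute a.1 b.1 := by
    show x • U * y • V = y • V * x • U
    simp only [smul_mul_smul_comm, mul_comm y x, hxy, zero_smul]
  calc (commGraph S n).edist u v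
      ≤ (commGraph S n).edist u b + (commGraph S n).edist b v := SimpleGraph.edist_triangle
    _ ≤ (commGraph S n).edist u a + (commGraph S n).edist a b + (commGraph S n).edist b v := by
        gcongr
        exact SimpleGraph.edist_triangle
    _ ≤ 1 + 1 + 1 := by
        gcongr
        exacts [edist_le_one_of_commute huU, edist_le_one_of_commute hab,
          edist_le_one_of_commute hvV.symm]
    _ = 3 := by norm_num

end commGraph

open commGraph in
/-- If `S` is a nonentire commutative semiring (there are nonzero `x, y` with `x * y = 0`),
then for every `n ≥ 2` the diameter of the commuting graph `Γ(M_n(S))` equals 3. -/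
theorem diam_commGraph_nonentire (S : Type*) [CommSemiring S]
    (x y : S) (hx : x ≠ 0) (hy : y ≠ 0) (hxy : x * y = 0)
    (n : ℕ) (hn : 2 ≤ n) :
    (commGraph S n).ediam = 3 := by
  have : Nontrivial S := ⟨⟨x, 0, hx⟩⟩
  let σ := finRotate n
  let i₀ : Fin n := ⟨0, by omega⟩
  have hsupp : σ.support = Finset.univ := support_finRotate_of_le hn
  have hnc : ¬ Commute (single i₀ i₀ (1 : S)) (σ.permMatrix S) :=
    not_commute_single_permMatrix (Equiv.Perm.mem_support.mp (hsupp ▸ Finset.mem_univ i₀))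
  let u : {X : Matrix (Fin n) (Fin n) S // ¬ ∀ Y, X * Y = Y * X} := ⟨_, fun h => hnc (h _)⟩
  let v : {X : Matrix (Fin n) (Fin n) S // ¬ ∀ Y, X * Y = Y * X} := ⟨_, fun h => hnc (h _).symm⟩
  refine le_antisymm (SimpleGraph.ediam_le_of_edist_le (edist_le_three hn hx hy hxy)) ?_
  calc (3 : ℕ∞) ≤ (commGraph S n).edist u v :=
        three_le_edist_of_not_commute hnc fun Z hu hv => by
          rw [forall_mul_comm_iff_mem_center, center_eq_range]
          exact mem_range_scalar_of_commute_single_of_commute_permMatrix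
            (isCycle_finRotate_of_le hn) hsupp hu hv.symm
    _ ≤ (commGraph S n).ediam := SimpleGraph.edist_le_ediam
end

section
/- Let S be a nontrivial commutative entire antinegative semiring. A matrix A ∈ M_2(S) is nilpotent (A^k = 0 for some k ≥ 1) if and only if A = a·E_{1,2} for some a ∈ S or A = a·E_{2,1} for some a ∈ S; equivalently, iff both diagonal entries of A are 0 and at least one off-diagonal entry of A is 0. Moreover, two nonzero nilpotent matrices A, B ∈ M_2(S) commute if and only if they are both strictly upper triangular or both strictly lower triangular. -/
/-!
Over an antinegative semiring the diagonal entry `(A ^ k) i i` is `A i i ^ k` plus something,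
so a nilpotent matrix has nilpotent, hence (in an entire semiring) zero, diagonal entries.
A `2 × 2` matrix with zero diagonal squares to the scalar matrix `A 0 1 * A 1 0`, so it is
nilpotent iff one off-diagonal entry vanishes, i.e. iff it is `a • E₁₂` or `a • E₂₁`.
Two such matrices of the same shape multiply to zero both ways, whereas `a • E₁₂` and
`b • E₂₁` commute only if `a * b = 0`.
-/

theorem isNilpotent_iff_exists_pos_pow_eq_zero {M : Type*} [MonoidWithZero M] {x : M} :
    IsNilpotent x ↔ ∃ k, 1 ≤ k ∧ x ^ k = 0 :=
  ⟨fun ⟨k, hk⟩ ↦ ⟨k + 1, Nat.le_add_left 1 k, by rw [pow_succ, hk, zero_mul]⟩,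
    fun ⟨k, _, hk⟩ ↦ ⟨k, hk⟩⟩

namespace Matrix

section DiagonalOfPow

variable {n R : Type*} [Fintype n] [DecidableEq n] [Semiring R]

theorem exists_pow_apply_self_eq_add (A : Matrix n n R) (i : n) (k : ℕ) :
    ∃ r, (A ^ k) i i = A i i ^ k + r := by
  induction k with
  | zero => exact ⟨0, by simp⟩
  | succ k ih =>
    obtain ⟨r, hr⟩ := ih
    refine ⟨r * A i i + ∑ j ∈ Finset.univ.erase i, (A ^ k) i j * A j i, ?_⟩
    rw [pow_succ, mul_apply, ← Finset.add_sum_erase _ _ (Finset.mem_univ i), hr]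
    noncomm_ring

theorem isNilpotent_apply_self_of_isNilpotent (hanti : ∀ a b : R, a + b = 0 → a = 0 ∧ b = 0)
    {A : Matrix n n R} (hA : IsNilpotent A) (i : n) : IsNilpotent (A i i) := by
  obtain ⟨k, hk⟩ := hA
  obtain ⟨r, hr⟩ := A.exists_pow_apply_self_eq_add i k
  rw [hk, zero_apply] at hr
  exact ⟨k, (hanti _ _ hr.symm).1⟩

end DiagonalOfPow

variable {S : Type*} [CommSemiring S]

theorem fin_two_sq_of_diag_eq_zero {A : Matrix (Fin 2) (Fin 2) S} (h₀ : A 0 0 = 0)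
    (h₁ : A 1 1 = 0) : A ^ 2 = scalar (Fin 2) (A 0 1 * A 1 0) := by
  ext i j
  fin_cases i <;> fin_cases j <;> simp [sq, mul_apply, h₀, h₁, mul_comm]

theorem isNilpotent_fin_two_iff [NoZeroDivisors S]
    (hanti : ∀ a b : S, a + b = 0 → a = 0 ∧ b = 0) {A : Matrix (Fin 2) (Fin 2) S} :
    IsNilpotent A ↔ A 0 0 = 0 ∧ A 1 1 = 0 ∧ (A 0 1 = 0 ∨ A 1 0 = 0) := by
  constructor
  · intro hA
    have h₀ := (isNilpotent_apply_self_of_isNilpotent hanti hA 0).eq_zero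
    have h₁ := (isNilpotent_apply_self_of_isNilpotent hanti hA 1).eq_zero
    have hsq : IsNilpotent (scalar (Fin 2) (A 0 1 * A 1 0)) :=
      fin_two_sq_of_diag_eq_zero h₀ h₁ ▸ hA.pow_succ 1
    exact ⟨h₀, h₁, mul_eq_zero.mp ((IsNilpotent.map_iff fun _ _ ↦ scalar_inj.mp).mp hsq).eq_zero⟩
  · rintro ⟨h₀, h₁, h⟩
    refine ⟨2, ?_⟩
    rw [fin_two_sq_of_diag_eq_zero h₀ h₁, mul_eq_zero.mpr h, map_zero]

section Single

variable {n R : Type*} [DecidableEq n]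

@[simp]
theorem single_eq_zero_iff [Zero R] {i j : n} {a : R} : single i j a = 0 ↔ a = 0 :=
  ⟨fun h ↦ by simpa using congr_fun₂ h i j, fun h ↦ h ▸ single_zero i j⟩

theorem exists_eq_single_zero_one_iff [Zero R] {A : Matrix (Fin 2) (Fin 2) R} :
    (∃ a, A = single 0 1 a) ↔ A 0 0 = 0 ∧ A 1 1 = 0 ∧ A 1 0 = 0 := by
  refine ⟨by rintro ⟨a, rfl⟩; simp, fun ⟨h₀, h₁, h⟩ ↦ ⟨A 0 1, ?_⟩⟩
  ext i j
  fin_cases i <;> fin_cases j <;> simp [h₀, h₁, h]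

theorem exists_eq_single_one_zero_iff [Zero R] {A : Matrix (Fin 2) (Fin 2) R} :
    (∃ a, A = single 1 0 a) ↔ A 0 0 = 0 ∧ A 1 1 = 0 ∧ A 0 1 = 0 := by
  refine ⟨by rintro ⟨a, rfl⟩; simp, fun ⟨h₀, h₁, h⟩ ↦ ⟨A 1 0, ?_⟩⟩
  ext i j
  fin_cases i <;> fin_cases j <;> simp [h₀, h₁, h]

variable [Fintype n]

theorem commute_single_single_self [Semiring R] {i j : n} (hij : i ≠ j) (a b : R) :
    Commute (single i j a) (single i j b) := by
  rw [Commute, SemiconjBy, single_mul_single_of_ne _ _ _ _ hij.symm,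
    single_mul_single_of_ne _ _ _ _ hij.symm]

theorem commute_single_single_swap_iff [Semiring R] {i j : n} (hij : i ≠ j) (a b : R) :
    Commute (single i j a) (single j i b) ↔ a * b = 0 ∧ b * a = 0 := by
  rw [Commute, SemiconjBy, single_mul_single_same, single_mul_single_same]
  refine ⟨fun h ↦ ⟨?_, ?_⟩, fun ⟨hab, hba⟩ ↦ by rw [hab, hba, single_zero, single_zero]⟩
  · simpa [hij.symm] using congr_fun₂ h i i
  · simpa [hij] using (congr_fun₂ h j j).symm

end Single

theorem isNilpotent_fin_two_iff_exists_single [NoZeroDivisors S]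
    (hanti : ∀ a b : S, a + b = 0 → a = 0 ∧ b = 0) {A : Matrix (Fin 2) (Fin 2) S} :
    IsNilpotent A ↔ (∃ a, A = single 0 1 a) ∨ (∃ a, A = single 1 0 a) := by
  rw [isNilpotent_fin_two_iff hanti, exists_eq_single_zero_one_iff, exists_eq_single_one_zero_iff]
  tauto

end Matrix

open Matrix in
theorem nilpotent_two_by_two_general (S : Type*) [CommSemiring S]
    (hentire : ∀ a b : S, a * b = 0 → a = 0 ∨ b = 0)
    (hanti : ∀ a b : S, a + b = 0 → a = 0 ∧ b = 0) :
    (∀ A : Matrix (Fin 2) (Fin 2) S,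
        (∃ k, 1 ≤ k ∧ A ^ k = 0) ↔
          ((∃ a : S, A = a • Matrix.single 0 1 (1 : S)) ∨
            (∃ a : S, A = a • Matrix.single 1 0 (1 : S)))) ∧
    (∀ A : Matrix (Fin 2) (Fin 2) S,
        (∃ k, 1 ≤ k ∧ A ^ k = 0) ↔
          (A 0 0 = 0 ∧ A 1 1 = 0 ∧ (A 0 1 = 0 ∨ A 1 0 = 0))) ∧
    (∀ A B : Matrix (Fin 2) (Fin 2) S, A ≠ 0 → B ≠ 0 →
        (∃ k, 1 ≤ k ∧ A ^ k = 0) → (∃ k, 1 ≤ k ∧ B ^ k = 0) →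
        (A * B = B * A ↔
          ((A 0 0 = 0 ∧ A 1 1 = 0 ∧ A 1 0 = 0) ∧ (B 0 0 = 0 ∧ B 1 1 = 0 ∧ B 1 0 = 0)) ∨
            ((A 0 0 = 0 ∧ A 1 1 = 0 ∧ A 0 1 = 0) ∧ (B 0 0 = 0 ∧ B 1 1 = 0 ∧ B 0 1 = 0)))) := by
  have : NoZeroDivisors S := ⟨hentire _ _⟩
  simp only [← isNilpotent_iff_exists_pos_pow_eq_zero, smul_single, smul_eq_mul, mul_one]
  refine ⟨fun _ ↦ isNilpotent_fin_two_iff_exists_single hanti,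
    fun _ ↦ isNilpotent_fin_two_iff hanti, fun A B hA hB hAn hBn ↦ ?_⟩
  change Commute A B ↔ _
  have h01 : (0 : Fin 2) ≠ 1 := zero_ne_one
  rcases (isNilpotent_fin_two_iff_exists_single hanti).mp hAn with ⟨a, rfl⟩ | ⟨a, rfl⟩ <;>
  rcases (isNilpotent_fin_two_iff_exists_single hanti).mp hBn with ⟨b, rfl⟩ | ⟨b, rfl⟩ <;>
  simp only [ne_eq, single_eq_zero_iff] at hA hB
  · simpa using commute_single_single_self h01 a b
  · simp [commute_single_single_swap_iff h01, hA, hB]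
  · simp [commute_single_single_swap_iff h01.symm, hA, hB]
  · simpa using commute_single_single_self h01.symm a b

/-- Over a nontrivial commutative entire antinegative semiring `S`, a matrix `A ∈ M_2(S)` is
nilpotent iff it is `a • E_{1,2}` or `a • E_{2,1}` for some `a ∈ S`, equivalently iff both its
diagonal entries vanish and at least one off-diagonal entry vanishes; moreover two nonzero
nilpotent matrices commute iff they are both strictly upper triangular or both strictly lower
triangular. -/
theorem nilpotent_two_by_two (S : Type*) [CommSemiring S] [Nontrivial S]
    (hentire : ∀ a b : S, a * b = 0 → a = 0 ∨ b = 0)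
    (hanti : ∀ a b : S, a + b = 0 → a = 0 ∧ b = 0) :
    (∀ A : Matrix (Fin 2) (Fin 2) S,
        (∃ k, 1 ≤ k ∧ A ^ k = 0) ↔
          ((∃ a : S, A = a • Matrix.single 0 1 (1 : S)) ∨
            (∃ a : S, A = a • Matrix.single 1 0 (1 : S)))) ∧
    (∀ A : Matrix (Fin 2) (Fin 2) S,
        (∃ k, 1 ≤ k ∧ A ^ k = 0) ↔
          (A 0 0 = 0 ∧ A 1 1 = 0 ∧ (A 0 1 = 0 ∨ A 1 0 = 0))) ∧
    (∀ A B : Matrix (Fin 2) (Fin 2) S, A ≠ 0 → B ≠ 0 →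
        (∃ k, 1 ≤ k ∧ A ^ k = 0) → (∃ k, 1 ≤ k ∧ B ^ k = 0) →
        (A * B = B * A ↔
          ((A 0 0 = 0 ∧ A 1 1 = 0 ∧ A 1 0 = 0) ∧ (B 0 0 = 0 ∧ B 1 1 = 0 ∧ B 1 0 = 0)) ∨
            ((A 0 0 = 0 ∧ A 1 1 = 0 ∧ A 0 1 = 0) ∧ (B 0 0 = 0 ∧ B 1 1 = 0 ∧ B 0 1 = 0)))) :=
  nilpotent_two_by_two_general S hentire hanti
end
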